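/- Let P⁺ and P⁻ be finite sets of propositional variables and let M0 and M1 be finite Kripke models with worlds x0, x1 such that x0 R0 y for every world y of M0 and x1 R1 y for every world y of M1. If (M0,x0) →₃^{(P⁺,P⁻)} (M1,x1), then (1) for every cluster C0 of final worlds of M0 there exists a cluster C1 of final worlds of M1 such that C0 matches C1, and (2) for every cluster C1 of final worlds of M1 there exists a cluster C0 of final worlds of M0 such that C0 matches C1. -/

import Mathlib

/-- Modal formulas over countably many variables. -/
inductive ModalForm : Type where
  | var : ℕ → ModalForm
  | bot : ModalForm
  | and : ModalForm → ModalForm → ModalForm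
  | or : ModalForm → ModalForm → ModalForm
  | not : ModalForm → ModalForm
  | imp : ModalForm → ModalForm → ModalForm
  | box : ModalForm → ModalForm

namespace ModalForm

mutual
  /-- positively occurring variables -/
  def vpos : ModalForm → Finset ℕ
    | var p => {p}
    | bot => ∅
    | and φ ψ => vpos φ ∪ vpos ψ
    | or φ ψ => vpos φ ∪ vpos ψ
    | not φ => vneg φ
    | imp φ ψ => vneg φ ∪ vpos ψ
    | box φ => vpos φ
  /-- negatively occurring variables -/
  def vneg : ModalForm → Finset ℕ
    | var _ => ∅
    | bot => ∅
    | and φ ψ => vneg φ ∪ vneg ψ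
    | or φ ψ => vneg φ ∪ vneg ψ
    | not φ => vpos φ
    | imp φ ψ => vpos φ ∪ vneg ψ
    | box φ => vneg φ
end

/-- Modal depth: maximal nesting of `□`. -/
def depth : ModalForm → ℕ
  | var _ => 0
  | bot => 0
  | and φ ψ => max (depth φ) (depth ψ)
  | or φ ψ => max (depth φ) (depth ψ)
  | not φ => depth φ
  | imp φ ψ => max (depth φ) (depth ψ)
  | box φ => depth φ + 1

/-- `◇φ := ¬□¬φ` -/
def dia (φ : ModalForm) : ModalForm := not (box (not φ))

/-- `⊤ := ¬⊥` -/
def top : ModalForm := not bot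

end ModalForm

/-- An S4 Kripke frame: nonempty set of worlds with a reflexive transitive relation. -/
structure KFrame : Type 1 where
  W : Type
  R : W → W → Prop
  nonempty : Nonempty W
  refl : ∀ x, R x x
  trans : ∀ x y z, R x y → R y z → R x z

/-- A Kripke model: a frame with a valuation. -/
structure KModel : Type 1 extends KFrame where
  val : W → ℕ → Prop

/-- The model based on frame `F` with valuation `V`. -/
def KFrame.toModel (F : KFrame) (V : F.W → ℕ → Prop) : KModel :=
  { toKFrame := F, val := V }

/-- Satisfaction in a Kripke model. -/
def KModel.Sat (M : KModel) : M.W → ModalForm → Prop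
  | w, .var p => M.val w p
  | _, .bot => False
  | w, .and φ ψ => M.Sat w φ ∧ M.Sat w ψ
  | w, .or φ ψ => M.Sat w φ ∨ M.Sat w ψ
  | w, .not φ => ¬ M.Sat w φ
  | w, .imp φ ψ => M.Sat w φ → M.Sat w ψ
  | w, .box φ => ∀ y, M.R w y → M.Sat y φ

/-- `(M0,w0) →ₙ^{(P⁺,P⁻)} (M1,w1)`: every `(P⁺,P⁻)`-formula of depth ≤ n
satisfied at `(M0,w0)` is satisfied at `(M1,w1)`. -/
def ModalArrow (Pp Pm : Finset ℕ) (n : ℕ) (M0 : KModel) (w0 : M0.W)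
    (M1 : KModel) (w1 : M1.W) : Prop :=
  ∀ φ : ModalForm, φ.vpos ⊆ Pp → φ.vneg ⊆ Pm → φ.depth ≤ n →
    M0.Sat w0 φ → M1.Sat w1 φ

/-- p-morphism between frames. -/
def PMorphism (F G : KFrame) (f : F.W → G.W) : Prop :=
  (∀ x y, F.R x y → G.R (f x) (f y)) ∧
  (∀ x w, G.R (f x) w → ∃ z, F.R x z ∧ f z = w)

/-- The class `C` of Kripke models enjoys `n`-IP. -/
def EnjoysIP (C : Set KModel) (n : ℕ) : Prop :=
  ∀ (Pp Pm : Finset ℕ) (M0 M1 : KModel), M0 ∈ C → M1 ∈ C →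
    ∀ (w0 : M0.W) (w1 : M1.W), ModalArrow Pp Pm n M0 w0 M1 w1 →
      ∃ (F : KFrame) (wstar : F.W) (f0 : F.W → M0.W) (f1 : F.W → M1.W),
        (∀ V : F.W → ℕ → Prop, F.toModel V ∈ C) ∧
        PMorphism F M0.toKFrame f0 ∧
        PMorphism F M1.toKFrame f1 ∧
        f0 wstar = w0 ∧ f1 wstar = w1 ∧
        ∀ x : F.W, ModalArrow Pp Pm 0 M0 (f0 x) M1 (f1 x)

/-- A world is final iff every successor is also a predecessor. -/
def KModel.Final (M : KModel) (w : M.W) : Prop := ∀ y, M.R w y → M.R y w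

/-- The cluster of a world. -/
def KModel.cluster (M : KModel) (w : M.W) : Set M.W := {u | M.R w u ∧ M.R u w}

/-- Cluster `C0` of `M0` matches cluster `C1` of `M1`. -/
def Matches (Pp Pm : Finset ℕ) (M0 M1 : KModel) (C0 : Set M0.W) (C1 : Set M1.W) : Prop :=
  (∀ u0 ∈ C0, ∃ u1 ∈ C1, ModalArrow Pp Pm 0 M0 u0 M1 u1) ∧
  (∀ u1 ∈ C1, ∃ u0 ∈ C0, ModalArrow Pp Pm 0 M0 u0 M1 u1)

/-- `φ` is satisfied at every world of every model in `C`. -/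
def ValidOn (C : Set KModel) (φ : ModalForm) : Prop :=
  ∀ M ∈ C, ∀ w : M.W, M.Sat w φ

/-!
A final cluster `C` of `M0` is pinned down, up to depth-0 `(P⁺,P⁻)`-types of its worlds, by the
depth-2 formula `σ_C = □(⋁_{v ∈ C} χ_v ∧ ⋀_{v ∈ C} ◇χ_v)`, where `χ_v` is the characteristic
depth-0 `(P⁺,P⁻)`-formula of `v`. Since `x0` sees `C`, the depth-3 formula `◇σ_C` holds at `x0`,
hence at `x1`; the cluster of any final world above a witness of `σ_C` in `M1` matches `C`.
The second claim is the first one for `(M1,x1) →₃^{(P⁻,P⁺)} (M0,x0)`, which holds by negation.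
-/

namespace ModalForm

def conj : List ModalForm → ModalForm
  | [] => top
  | φ :: l => φ.and (conj l)

def disj : List ModalForm → ModalForm
  | [] => bot
  | φ :: l => φ.or (disj l)

def InFragment (P Q : Finset ℕ) (n : ℕ) (φ : ModalForm) : Prop :=
  φ.vpos ⊆ P ∧ φ.vneg ⊆ Q ∧ φ.depth ≤ n

variable {P Q : Finset ℕ} {m n : ℕ} {φ ψ : ModalForm}

theorem inFragment_and :
    InFragment P Q n (φ.and ψ) ↔ InFragment P Q n φ ∧ InFragment P Q n ψ := by
  simp only [InFragment, vpos, vneg, depth, Finset.union_subset_iff, max_le_iff]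
  tauto

theorem inFragment_or :
    InFragment P Q n (φ.or ψ) ↔ InFragment P Q n φ ∧ InFragment P Q n ψ := by
  simp only [InFragment, vpos, vneg, depth, Finset.union_subset_iff, max_le_iff]
  tauto

theorem inFragment_imp :
    InFragment P Q n (φ.imp ψ) ↔ InFragment Q P n φ ∧ InFragment P Q n ψ := by
  simp only [InFragment, vpos, vneg, depth, Finset.union_subset_iff, max_le_iff]
  tauto

theorem inFragment_not : InFragment P Q n φ.not ↔ InFragment Q P n φ := by
  simp only [InFragment, vpos, vneg, depth]
  tauto

namespace InFragment

theorem mono (h : InFragment P Q m φ) (hmn : m ≤ n) : InFragment P Q n φ :=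
  ⟨h.1, h.2.1, h.2.2.trans hmn⟩

theorem bot : InFragment P Q n ModalForm.bot := by
  simp [InFragment, vpos, vneg, depth]

theorem not (h : InFragment Q P n φ) : InFragment P Q n φ.not :=
  inFragment_not.2 h

theorem box (h : InFragment P Q n φ) : InFragment P Q (n + 1) φ.box :=
  ⟨h.1, h.2.1, Nat.succ_le_succ h.2.2⟩

theorem dia (h : InFragment P Q n φ) : InFragment P Q (n + 1) φ.dia :=
  h.not.box.not

theorem conj {l : List ModalForm} (h : ∀ φ ∈ l, InFragment P Q n φ) :
    InFragment P Q n (ModalForm.conj l) := by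
  induction l with
  | nil => exact InFragment.bot.not
  | cons φ l ih => exact inFragment_and.2 ⟨h φ (by simp), ih fun ψ hψ => h ψ (by simp [hψ])⟩

theorem disj {l : List ModalForm} (h : ∀ φ ∈ l, InFragment P Q n φ) :
    InFragment P Q n (ModalForm.disj l) := by
  induction l with
  | nil => exact InFragment.bot
  | cons φ l ih => exact inFragment_or.2 ⟨h φ (by simp), ih fun ψ hψ => h ψ (by simp [hψ])⟩

end InFragment

end ModalForm

open ModalForm

namespace KModel

variable {M : KModel} {w : M.W}

theorem sat_conj_iff {l : List ModalForm} : M.Sat w (conj l) ↔ ∀ φ ∈ l, M.Sat w φ := by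
  induction l with
  | nil => simp [conj, top, Sat]
  | cons φ l ih => simp [conj, Sat, ih]

theorem sat_disj_iff {l : List ModalForm} : M.Sat w (disj l) ↔ ∃ φ ∈ l, M.Sat w φ := by
  induction l with
  | nil => simp [disj, Sat]
  | cons φ l ih => simp [disj, Sat, ih]

theorem sat_dia_iff {φ : ModalForm} : M.Sat w φ.dia ↔ ∃ y, M.R w y ∧ M.Sat y φ := by
  simp [dia, Sat]

end KModel

open KModel

def AtomArrow (P Q : Finset ℕ) (V0 V1 : ℕ → Prop) : Prop :=
  (∀ p ∈ P, V0 p → V1 p) ∧ (∀ p ∈ Q, V1 p → V0 p)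

theorem AtomArrow.refl (P Q : Finset ℕ) (V : ℕ → Prop) : AtomArrow P Q V V :=
  ⟨fun _ _ => id, fun _ _ => id⟩

theorem AtomArrow.swap {P Q : Finset ℕ} {V0 V1 : ℕ → Prop} (h : AtomArrow P Q V0 V1) :
    AtomArrow Q P V1 V0 :=
  ⟨h.2, h.1⟩

/-- Negation swaps the roles of the two models together with those of `P` and `Q`, so the
induction has to quantify over both. -/
theorem ModalForm.sat_of_atomArrow (φ : ModalForm) :
    ∀ {P Q : Finset ℕ} {M0 M1 : KModel} {v0 : M0.W} {v1 : M1.W}, InFragment P Q 0 φ →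
      AtomArrow P Q (M0.val v0) (M1.val v1) → M0.Sat v0 φ → M1.Sat v1 φ := by
  induction φ with
  | var p => exact fun hφ h => h.1 p (by simpa [vpos] using hφ.1)
  | bot => exact fun _ _ => id
  | and φ ψ ihφ ihψ =>
    intro _ _ _ _ _ _ hφψ h hs
    rw [inFragment_and] at hφψ
    exact ⟨ihφ hφψ.1 h hs.1, ihψ hφψ.2 h hs.2⟩
  | or φ ψ ihφ ihψ =>
    intro _ _ _ _ _ _ hφψ h hs
    rw [inFragment_or] at hφψ
    exact hs.imp (ihφ hφψ.1 h) (ihψ hφψ.2 h)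
  | not φ ih => exact fun hφ h hs hs' => hs (ih (inFragment_not.1 hφ) h.swap hs')
  | imp φ ψ ihφ ihψ =>
    intro _ _ _ _ _ _ hφψ h hs hs'
    rw [inFragment_imp] at hφψ
    exact ihψ hφψ.2 h (hs (ihφ hφψ.1 h.swap hs'))
  | box φ _ => exact fun hφ => absurd hφ.2.2 (by simp [depth])

theorem modalArrow_zero_of_atomArrow {P Q : Finset ℕ} {M0 M1 : KModel} {v0 : M0.W} {v1 : M1.W}
    (h : AtomArrow P Q (M0.val v0) (M1.val v1)) : ModalArrow P Q 0 M0 v0 M1 v1 :=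
  fun φ hp hn hd => φ.sat_of_atomArrow ⟨hp, hn, hd⟩ h

theorem ModalArrow.swap {P Q : Finset ℕ} {n : ℕ} {M0 M1 : KModel} {w0 : M0.W} {w1 : M1.W}
    (h : ModalArrow P Q n M0 w0 M1 w1) : ModalArrow Q P n M1 w1 M0 w0 :=
  fun φ hp hn hd hs => by_contra fun hc => h φ.not hn hp hd hc hs

theorem Matches.swap {P Q : Finset ℕ} {M0 M1 : KModel} {C0 : Set M0.W} {C1 : Set M1.W}
    (h : Matches P Q M0 M1 C0 C1) : Matches Q P M1 M0 C1 C0 :=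
  ⟨fun u1 hu1 => (h.2 u1 hu1).imp fun _ ⟨hu0, ha⟩ => ⟨hu0, ha.swap⟩,
    fun u0 hu0 => (h.1 u0 hu0).imp fun _ ⟨hu1, ha⟩ => ⟨hu1, ha.swap⟩⟩

namespace ModalForm

open Classical in
/-- The characteristic formula of the depth-0 `(P,Q)`-type of a world with valuation `V`. -/
noncomputable def charForm (P Q : Finset ℕ) (V : ℕ → Prop) : ModalForm :=
  conj ((P.filter V).toList.map var ++ (Q.filter (¬ V ·)).toList.map fun p => (var p).not)

theorem inFragment_charForm (P Q : Finset ℕ) (V : ℕ → Prop) :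
    InFragment P Q 0 (charForm P Q V) := by
  refine InFragment.conj fun φ hφ => ?_
  simp only [List.mem_append, List.mem_map, Finset.mem_toList, Finset.mem_filter] at hφ
  rcases hφ with ⟨p, ⟨hp, -⟩, rfl⟩ | ⟨p, ⟨hp, -⟩, rfl⟩ <;>
    simp [InFragment, vpos, vneg, depth, hp]

theorem sat_charForm_iff {P Q : Finset ℕ} {V : ℕ → Prop} {M : KModel} {w : M.W} :
    M.Sat w (charForm P Q V) ↔ AtomArrow P Q V (M.val w) := by
  simp only [charForm, sat_conj_iff, List.forall_mem_append, List.forall_mem_map,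
    Finset.mem_toList, Finset.mem_filter, and_imp, Sat, AtomArrow, not_imp_not]

noncomputable def clusterForm (P Q : Finset ℕ) (Vs : List (ℕ → Prop)) : ModalForm :=
  ((disj (Vs.map (charForm P Q))).and (conj (Vs.map fun V => (charForm P Q V).dia))).box

theorem inFragment_clusterForm (P Q : Finset ℕ) (Vs : List (ℕ → Prop)) :
    InFragment P Q 2 (clusterForm P Q Vs) := by
  refine InFragment.box (inFragment_and.2 ⟨?_, ?_⟩)
  · exact (InFragment.disj <| by simpa using fun V _ => inFragment_charForm P Q V).mono zero_le_one
  · exact InFragment.conj <| by simpa using fun V _ => (inFragment_charForm P Q V).dia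

theorem sat_clusterForm_iff {P Q : Finset ℕ} {Vs : List (ℕ → Prop)} {M : KModel} {w : M.W} :
    M.Sat w (clusterForm P Q Vs) ↔ ∀ y, M.R w y →
      (∃ V ∈ Vs, AtomArrow P Q V (M.val y)) ∧
        ∀ V ∈ Vs, ∃ z, M.R y z ∧ AtomArrow P Q V (M.val z) := by
  simp [clusterForm, Sat, sat_disj_iff, sat_conj_iff, sat_dia_iff, sat_charForm_iff]

end ModalForm

namespace KModel

variable {M : KModel}

theorem exists_final [Finite M.W] (w : M.W) : ∃ u, M.R w u ∧ M.Final u := by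
  obtain ⟨u, hwu, hmin⟩ := Set.exists_min_image {y | M.R w y} (fun y => {z | M.R y z}.ncard)
    (Set.toFinite _) ⟨w, M.refl w⟩
  refine ⟨u, hwu, fun y huy => ?_⟩
  have hsub : {z | M.R y z} ⊆ {z | M.R u z} := fun z hyz => M.trans _ _ _ huy hyz
  have hsucc := Set.eq_of_subset_of_ncard_le hsub (hmin y (M.trans _ _ _ hwu huy)) (Set.toFinite _)
  show u ∈ {z | M.R y z}
  rw [hsucc]
  exact M.refl u

theorem sat_clusterForm_of_final (P Q : Finset ℕ) {u : M.W} (hu : M.Final u) {L : List M.W}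
    (hL : ∀ v, v ∈ L ↔ v ∈ M.cluster u) : M.Sat u (clusterForm P Q (L.map M.val)) := by
  refine sat_clusterForm_iff.2 fun y huy => ⟨?_, ?_⟩
  · exact ⟨M.val y, List.mem_map_of_mem ((hL y).2 ⟨huy, hu y huy⟩), AtomArrow.refl P Q _⟩
  · simp only [List.mem_map, forall_exists_index, and_imp, forall_apply_eq_imp_iff₂]
    exact fun v hv => ⟨v, M.trans _ _ _ (hu y huy) ((hL v).1 hv).1, AtomArrow.refl P Q _⟩

end KModel

theorem matches_of_sat_clusterForm {P Q : Finset ℕ} {M0 M1 : KModel} {u0 : M0.W}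
    {L : List M0.W} (hL : ∀ v, v ∈ L ↔ v ∈ M0.cluster u0) {w u1 : M1.W}
    (hw : M1.Sat w (clusterForm P Q (L.map M0.val))) (hwu1 : M1.R w u1) (hu1 : M1.Final u1) :
    Matches P Q M0 M1 (M0.cluster u0) (M1.cluster u1) := by
  rw [sat_clusterForm_iff] at hw
  constructor
  · intro v hv
    obtain ⟨y, hu1y, hy⟩ := (hw u1 hwu1).2 (M0.val v) (List.mem_map_of_mem ((hL v).2 hv))
    exact ⟨y, ⟨hu1y, hu1 y hu1y⟩, modalArrow_zero_of_atomArrow hy⟩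
  · intro y hy
    obtain ⟨V, hV, hVy⟩ := (hw y (M1.trans _ _ _ hwu1 hy.1)).1
    obtain ⟨v, hv, rfl⟩ := List.mem_map.1 hV
    exact ⟨v, (hL v).1 hv, modalArrow_zero_of_atomArrow hVy⟩

theorem exists_final_matches_of_modalArrow_three {P Q : Finset ℕ} {M0 M1 : KModel}
    [Finite M0.W] [Finite M1.W] {x0 : M0.W} {x1 : M1.W} (hx0 : ∀ y, M0.R x0 y)
    (h : ModalArrow P Q 3 M0 x0 M1 x1) {u0 : M0.W} (hu0 : M0.Final u0) :
    ∃ u1 : M1.W, M1.Final u1 ∧ Matches P Q M0 M1 (M0.cluster u0) (M1.cluster u1) := by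
  obtain ⟨L, hL⟩ : ∃ L : List M0.W, ∀ v, v ∈ L ↔ v ∈ M0.cluster u0 :=
    ⟨(Set.toFinite (M0.cluster u0)).toFinset.toList, by simp⟩
  have hσ := (inFragment_clusterForm P Q (L.map M0.val)).dia
  have hx1 := h _ hσ.1 hσ.2.1 hσ.2.2 <|
    sat_dia_iff.2 ⟨u0, hx0 u0, M0.sat_clusterForm_of_final P Q hu0 hL⟩
  obtain ⟨w, -, hw⟩ := sat_dia_iff.1 hx1
  obtain ⟨u1, hwu1, hu1⟩ := M1.exists_final w
  exact ⟨u1, hu1, matches_of_sat_clusterForm hL hw hwu1 hu1⟩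

theorem stmt6 (Pp Pm : Finset ℕ) (M0 M1 : KModel)
    (hf0 : Finite M0.W) (hf1 : Finite M1.W)
    (x0 : M0.W) (x1 : M1.W)
    (h0 : ∀ y : M0.W, M0.R x0 y) (h1 : ∀ y : M1.W, M1.R x1 y)
    (h : ModalArrow Pp Pm 3 M0 x0 M1 x1) :
    (∀ u0 : M0.W, M0.Final u0 → ∃ u1 : M1.W, M1.Final u1 ∧
        Matches Pp Pm M0 M1 (M0.cluster u0) (M1.cluster u1)) ∧
    (∀ u1 : M1.W, M1.Final u1 → ∃ u0 : M0.W, M0.Final u0 ∧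
        Matches Pp Pm M0 M1 (M0.cluster u0) (M1.cluster u1)) := by
  refine ⟨fun u0 hu0 => exists_final_matches_of_modalArrow_three h0 h hu0, fun u1 hu1 => ?_⟩
  obtain ⟨u0, hu0, hm⟩ := exists_final_matches_of_modalArrow_three h1 h.swap hu1
  exact ⟨u0, hu0, hm.swap⟩
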